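/- For every z ∈ 𝔻, the supremum sup{ |g'(z)| : g : 𝔻 → ℂ holomorphic, g(0) = 0, ρ_B(g) ≤ 1 } equals 1/(1 - |z|²), and it is attained by the function f_z(w) = (1 - |z|²)w/(1 - conj(z)w). -/

import Mathlib

/-! The bound `(1 - |z|²) |g'(z)| ≤ 1` at the single point `w = z` already gives
`|g'(z)| ≤ 1/(1 - |z|²)`. For the extremal function, `f_z'(w) = (1 - |z|²)/(1 - z̄w)²`, and
`(1 - |z|²)(1 - |w|²) ≤ (1 - |z||w|)² ≤ |1 - z̄w|²` shows that `f_z` has Bloch seminorm at most `1`,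
with equality at `w = z` since `1 - z̄z = 1 - |z|²`. -/

open Complex Metric Set

noncomputable def fz (z : ℂ) : ℂ → ℂ :=
  fun w => ((1 - ‖z‖ ^ 2 : ℝ) : ℂ) * w / (1 - (starRingEnd ℂ) z * w)

lemma one_sub_norm_mul_norm_le_norm_one_sub_conj_mul (z w : ℂ) :
    1 - ‖z‖ * ‖w‖ ≤ ‖1 - (starRingEnd ℂ) z * w‖ := by
  simpa [norm_mul] using norm_sub_norm_le (1 : ℂ) ((starRingEnd ℂ) z * w)

lemma one_sub_norm_mul_norm_pos {z w : ℂ} (hz : ‖z‖ < 1) (hw : ‖w‖ < 1) :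
    0 < 1 - ‖z‖ * ‖w‖ := by
  nlinarith [norm_nonneg z, norm_nonneg w]

lemma one_sub_conj_mul_ne_zero {z w : ℂ} (hz : ‖z‖ < 1) (hw : ‖w‖ < 1) :
    1 - (starRingEnd ℂ) z * w ≠ 0 :=
  norm_pos_iff.mp <| (one_sub_norm_mul_norm_pos hz hw).trans_le
    (one_sub_norm_mul_norm_le_norm_one_sub_conj_mul z w)

lemma one_sub_sq_mul_one_sub_sq_le_norm_one_sub_conj_mul_sq {z w : ℂ} (hz : ‖z‖ < 1)
    (hw : ‖w‖ < 1) :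
    (1 - ‖z‖ ^ 2) * (1 - ‖w‖ ^ 2) ≤ ‖1 - (starRingEnd ℂ) z * w‖ ^ 2 :=
  calc (1 - ‖z‖ ^ 2) * (1 - ‖w‖ ^ 2) = (1 - ‖z‖ * ‖w‖) ^ 2 - (‖z‖ - ‖w‖) ^ 2 := by ring
    _ ≤ (1 - ‖z‖ * ‖w‖) ^ 2 := sub_le_self _ (sq_nonneg _)
    _ ≤ ‖1 - (starRingEnd ℂ) z * w‖ ^ 2 :=
      pow_le_pow_left₀ (one_sub_norm_mul_norm_pos hz hw).le
        (one_sub_norm_mul_norm_le_norm_one_sub_conj_mul z w) 2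

lemma hasDerivAt_fz {z w : ℂ} (hw : 1 - (starRingEnd ℂ) z * w ≠ 0) :
    HasDerivAt (fz z) (((1 - ‖z‖ ^ 2 : ℝ) : ℂ) / (1 - (starRingEnd ℂ) z * w) ^ 2) w := by
  have hnum : HasDerivAt (fun w : ℂ => ((1 - ‖z‖ ^ 2 : ℝ) : ℂ) * w)
      ((1 - ‖z‖ ^ 2 : ℝ) : ℂ) w := by
    simpa only [mul_one, id_eq] using (hasDerivAt_id w).const_mul ((1 - ‖z‖ ^ 2 : ℝ) : ℂ)
  have hden : HasDerivAt (fun w : ℂ => 1 - (starRingEnd ℂ) z * w) (-(starRingEnd ℂ) z) w := by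
    simpa using ((hasDerivAt_id w).const_mul ((starRingEnd ℂ) z)).const_sub 1
  have hquot : HasDerivAt (fz z) _ w := hnum.div hden hw
  convert hquot using 2
  ring

lemma differentiableOn_fz {z : ℂ} (hz : ‖z‖ < 1) : DifferentiableOn ℂ (fz z) (ball 0 1) :=
  fun _ hw ↦ (hasDerivAt_fz (one_sub_conj_mul_ne_zero hz
    (mem_ball_zero_iff.mp hw))).differentiableAt.differentiableWithinAt

lemma fz_zero (z : ℂ) : fz z 0 = 0 := by
  simp [fz]

lemma norm_deriv_fz {z w : ℂ} (hz : ‖z‖ < 1) (hw : ‖w‖ < 1) :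
    ‖deriv (fz z) w‖ = (1 - ‖z‖ ^ 2) / ‖1 - (starRingEnd ℂ) z * w‖ ^ 2 := by
  have hz2 : 0 ≤ 1 - ‖z‖ ^ 2 := by nlinarith [norm_nonneg z]
  rw [(hasDerivAt_fz (one_sub_conj_mul_ne_zero hz hw)).deriv, norm_div, norm_pow,
    Complex.norm_real, Real.norm_of_nonneg hz2]

lemma one_sub_sq_mul_norm_deriv_fz_le_one {z w : ℂ} (hz : ‖z‖ < 1) (hw : ‖w‖ < 1) :
    (1 - ‖w‖ ^ 2) * ‖deriv (fz z) w‖ ≤ 1 := by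
  have hpos : 0 < ‖1 - (starRingEnd ℂ) z * w‖ ^ 2 :=
    pow_pos (norm_pos_iff.mpr (one_sub_conj_mul_ne_zero hz hw)) 2
  rw [norm_deriv_fz hz hw, ← mul_div_assoc, div_le_one hpos, mul_comm]
  exact one_sub_sq_mul_one_sub_sq_le_norm_one_sub_conj_mul_sq hz hw

lemma norm_deriv_fz_self {z : ℂ} (hz : ‖z‖ < 1) :
    ‖deriv (fz z) z‖ = 1 / (1 - ‖z‖ ^ 2) := by
  have hz2 : 0 < 1 - ‖z‖ ^ 2 := by nlinarith [norm_nonneg z]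
  have hself : ‖1 - (starRingEnd ℂ) z * z‖ = 1 - ‖z‖ ^ 2 := by
    rw [mul_comm, mul_conj, normSq_eq_norm_sq, ← ofReal_one, ← ofReal_sub, norm_real,
      Real.norm_of_nonneg hz2.le]
  rw [norm_deriv_fz hz hz, hself]
  field_simp

theorem stmt7 (z : ℂ) (hz : z ∈ ball (0 : ℂ) 1) :
    IsGreatest {r : ℝ | ∃ g : ℂ → ℂ, DifferentiableOn ℂ g (ball (0 : ℂ) 1) ∧ g 0 = 0 ∧
        (∀ w ∈ ball (0 : ℂ) 1, (1 - ‖w‖ ^ 2) * ‖deriv g w‖ ≤ 1) ∧ r = ‖deriv g z‖}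
      (1 / (1 - ‖z‖ ^ 2)) ∧
    DifferentiableOn ℂ (fz z) (ball (0 : ℂ) 1) ∧ fz z 0 = 0 ∧
    (∀ w ∈ ball (0 : ℂ) 1, (1 - ‖w‖ ^ 2) * ‖deriv (fz z) w‖ ≤ 1) ∧
    ‖deriv (fz z) z‖ = 1 / (1 - ‖z‖ ^ 2) := by
  have hz1 : ‖z‖ < 1 := mem_ball_zero_iff.mp hz
  have hz2 : 0 < 1 - ‖z‖ ^ 2 := by nlinarith [norm_nonneg z]
  have hbloch : ∀ w ∈ ball (0 : ℂ) 1, (1 - ‖w‖ ^ 2) * ‖deriv (fz z) w‖ ≤ 1 :=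
    fun w hw ↦ one_sub_sq_mul_norm_deriv_fz_le_one hz1 (mem_ball_zero_iff.mp hw)
  refine ⟨⟨⟨fz z, differentiableOn_fz hz1, fz_zero z, hbloch, (norm_deriv_fz_self hz1).symm⟩, ?_⟩,
    differentiableOn_fz hz1, fz_zero z, hbloch, norm_deriv_fz_self hz1⟩
  rintro r ⟨g, -, -, hg, rfl⟩
  rw [le_div_iff₀ hz2, mul_comm]
  exact hg z hz
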